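/- Reduction rule for Pareto sets of a union: for subsets A, B ⊆ X̃, the strong Pareto set of A ∪ B equals the strong Pareto set of 𝒫_L(A) ∪ B, provided the dominance relation restricted to A is such that every non-Pareto point of A is dominated by some Pareto point of A (e.g., A is finite). That is, 𝒫_L(A ∪ B) = 𝒫_L(𝒫_L(A) ∪ B). -/

import Mathlib

/-!
Dominance is a strict order, so on a finite set it is well founded. Hence every point of `A` is
either Pareto optimal in `A` or dominated by a Pareto optimal point of `A`, and by transitivity a
point of `A ∪ B` dominated by something in `A` is already dominated by something in `𝒫(A) ∪ B`.
-/

open Set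

section Undominated

variable {α : Type*} (r : α → α → Prop)

/-- `r y x` reads "`y` dominates `x`". -/
def undominated (S : Set α) : Set α :=
  {x ∈ S | ¬ ∃ y ∈ S, r y x}

variable {r}

theorem undominated_subset (S : Set α) : undominated r S ⊆ S :=
  fun _ hx => hx.1

theorem mem_undominated_of_subset {S T : Set α} (hST : S ⊆ T) {x : α} (hxS : x ∈ S)
    (hxT : x ∈ undominated r T) : x ∈ undominated r S :=
  ⟨hxS, fun ⟨y, hyS, hyx⟩ => hxT.2 ⟨y, hST hyS, hyx⟩⟩

theorem exists_undominated_eq_or_rel [IsTrans α r] {A : Set α} (hA : A.WellFoundedOn r)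
    {x : α} (hx : x ∈ A) : ∃ y ∈ undominated r A, y = x ∨ r y x := by
  obtain ⟨y, ⟨hyA, hyx⟩, hmin⟩ :=
    (wellFoundedOn_iff.mp hA).has_min {y | y ∈ A ∧ (y = x ∨ r y x)} ⟨x, hx, .inl rfl⟩
  refine ⟨y, ⟨hyA, fun ⟨z, hzA, hzy⟩ => hmin z ⟨hzA, .inr ?_⟩ ⟨hzy, hzA, hyA⟩⟩, hyx⟩
  rcases hyx with rfl | hyx
  · exact hzy
  · exact _root_.trans hzy hyx

theorem undominated_union_eq_undominated_undominated_union [IsTrans α r] {A : Set α}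
    (hA : A.WellFoundedOn r) (B : Set α) :
    undominated r (A ∪ B) = undominated r (undominated r A ∪ B) := by
  have hsub : undominated r A ∪ B ⊆ A ∪ B := union_subset_union_left B (undominated_subset A)
  ext x
  constructor
  · intro hx
    refine mem_undominated_of_subset hsub ?_ hx
    rcases hx.1 with hxA | hxB
    · exact .inl (mem_undominated_of_subset subset_union_left hxA hx)
    · exact .inr hxB
  · rintro ⟨hxmem, hxnd⟩
    refine ⟨hsub hxmem, fun ⟨y, hy, hyx⟩ => ?_⟩
    rcases hy with hyA | hyB
    · obtain ⟨z, hz, rfl | hzy⟩ := exists_undominated_eq_or_rel hA hyA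
      · exact hxnd ⟨z, .inl hz, hyx⟩
      · exact hxnd ⟨z, .inl hz, _root_.trans hzy hyx⟩
    · exact hxnd ⟨y, .inr hyB, hyx⟩

end Undominated

section Dominates

variable {α ι β : Type*} [Preorder β]

def Dominates (L : α → ι → β) (y x : α) : Prop :=
  (∀ i, L y i ≤ L x i) ∧ ∃ j, L y j < L x j

instance (L : α → ι → β) : IsStrictOrder α (Dominates L) where
  irrefl _ h := let ⟨_, _, hj⟩ := h; lt_irrefl _ hj
  trans _ _ _ hab hbc :=
    ⟨fun i => (hab.1 i).trans (hbc.1 i), let ⟨j, hj⟩ := hab.2; ⟨j, hj.trans_le (hbc.1 j)⟩⟩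

end Dominates

theorem pareto_union_reduction
    {Y : Type*} {N : ℕ} (L : Y → Fin N → ℝ) (A B : Set Y) (hA : A.Finite) :
    {x ∈ A ∪ B | ¬ ∃ y ∈ A ∪ B, (∀ i, L y i ≤ L x i) ∧ ∃ j, L y j < L x j}
      = {x ∈ ({x ∈ A | ¬ ∃ y ∈ A, (∀ i, L y i ≤ L x i) ∧ ∃ j, L y j < L x j} ∪ B) |
          ¬ ∃ y ∈ ({x ∈ A | ¬ ∃ y ∈ A, (∀ i, L y i ≤ L x i) ∧ ∃ j, L y j < L x j} ∪ B),
            (∀ i, L y i ≤ L x i) ∧ ∃ j, L y j < L x j} :=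
  undominated_union_eq_undominated_undominated_union (r := Dominates L) hA.wellFoundedOn B
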